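/- arXiv:1208.5579 — 4 statements merged into one kernel-verified Lean document; each statement's English description precedes it below -/
import Mathlib

section
/- Let A be an F-semilattice generated by a single element a and having a least element o. If s is a unary term with s(a) = o, then the identity s(x) ∧ y = s(x) holds in A. -/
inductive SLTerm (F : Type) : Type where
  | var : SLTerm F
  | meet : SLTerm F → SLTerm F → SLTerm F
  | act : F → SLTerm F → SLTerm F

/-- Evaluation of a unary term at an element of an `F`-semilattice. -/
def SLTerm.eval {F A : Type} [SemilatticeInf A] [SMul F A] : SLTerm F → A → A
  | .var, a => a
  | .meet s t, a => s.eval a ⊓ t.eval a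
  | .act g t, a => g • t.eval a

inductive SLTermN (F : Type) : Type where
  | var : ℕ → SLTermN F
  | meet : SLTermN F → SLTermN F → SLTermN F
  | act : F → SLTermN F → SLTermN F

def SLTermN.eval {F A : Type} [SemilatticeInf A] [SMul F A] : SLTermN F → (ℕ → A) → A
  | .var n, v => v n
  | .meet s t, v => s.eval v ⊓ t.eval v
  | .act g t, v => g • t.eval v

def SatQI (F : Type) (A : Type) [SemilatticeInf A] [SMul F A]
    (prem : List (SLTermN F × SLTermN F)) (c : SLTermN F × SLTermN F) : Prop :=
  ∀ v : ℕ → A, (∀ p ∈ prem, p.1.eval v = p.2.eval v) → c.1.eval v = c.2.eval v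

/-- `B` belongs to the quasivariety generated by `A`. -/
def InQ (F : Type) (A B : Type) [SemilatticeInf A] [SMul F A]
    [SemilatticeInf B] [SMul F B] : Prop :=
  ∀ prem c, SatQI F A prem c → SatQI F B prem c

/-- `B` belongs to the variety generated by `A`. -/
def InV (F : Type) (A B : Type) [SemilatticeInf A] [SMul F A]
    [SemilatticeInf B] [SMul F B] : Prop :=
  ∀ s t : SLTermN F, (∀ v : ℕ → A, s.eval v = t.eval v) → ∀ v : ℕ → B, s.eval v = t.eval v

def IsHom (F : Type) {A B : Type} [SemilatticeInf A] [SMul F A] [SemilatticeInf B] [SMul F B]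
    (φ : A → B) : Prop :=
  (∀ x y : A, φ (x ⊓ y) = φ x ⊓ φ y) ∧ ∀ (g : F) (x : A), φ (g • x) = g • φ x

/-- The subuniverse of `A` generated by `a`. -/
def genSet (F : Type) {A : Type} [SemilatticeInf A] [SMul F A] (a : A) : Set A :=
  Set.range fun t : SLTerm F => t.eval a

/-- The quasivariety generated by `A` is a minimal quasivariety of `F`-semilattices. -/
def MinGen (F : Type) [CommGroup F] (A : Type) [SemilatticeInf A] [MulAction F A] : Prop :=
  Nontrivial A ∧
    ∀ (B : Type) [SemilatticeInf B] [MulAction F B],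
      (∀ (g : F) (x y : B), g • (x ⊓ y) = g • x ⊓ g • y) →
      InQ F A B → Nontrivial B → InQ F B A

/-!
The action is by monotone maps fixing the bottom `o`, and since `F` is abelian every term
commutes with it. Each element `x` is `t(a)` for a term `t`, and `t(a) ≤ g • a` for some `g ∈ F`;
hence `s(x) ≤ s(g • a) = g • s(a) = g • o = o`, so `s` is constantly `o`.
-/

section

variable {F A : Type} [SemilatticeInf A]

theorem smul_mono_of_smul_inf [SMul F A] (hA : ∀ (g : F) (x y : A), g • (x ⊓ y) = g • x ⊓ g • y)
    (g : F) : Monotone (g • · : A → A) := by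
  intro x y hxy
  dsimp only
  rw [← inf_eq_left.mpr hxy, hA]
  exact inf_le_right

theorem smul_eq_of_forall_le [Group F] [MulAction F A] (hmono : ∀ g : F, Monotone (g • · : A → A))
    {o : A} (ho : ∀ x : A, o ≤ x) (g : F) : g • o = o :=
  le_antisymm (by simpa using hmono g (ho (g⁻¹ • o))) (ho _)

namespace SLTerm

theorem eval_mono [SMul F A] (hmono : ∀ g : F, Monotone (g • · : A → A)) (t : SLTerm F) :
    Monotone (t.eval : A → A) := by
  induction t with
  | var => exact monotone_id
  | meet u v ihu ihv => exact fun x y hxy => inf_le_inf (ihu hxy) (ihv hxy)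
  | act g t iht => exact (hmono g).comp iht

theorem exists_eval_le_smul [Monoid F] [MulAction F A] (hmono : ∀ g : F, Monotone (g • · : A → A))
    (t : SLTerm F) (x : A) : ∃ g : F, t.eval x ≤ g • x := by
  induction t with
  | var => exact ⟨1, (one_smul F x).ge⟩
  | meet u v ihu ihv =>
    obtain ⟨g, hg⟩ := ihu
    exact ⟨g, inf_le_left.trans hg⟩
  | act h t iht =>
    obtain ⟨g, hg⟩ := iht
    exact ⟨h * g, (mul_smul h g x).symm ▸ hmono h hg⟩

theorem eval_smul [CommMonoid F] [MulAction F A]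
    (hA : ∀ (g : F) (x y : A), g • (x ⊓ y) = g • x ⊓ g • y) (t : SLTerm F) (g : F) (x : A) :
    t.eval (g • x) = g • t.eval x := by
  induction t with
  | var => rfl
  | meet u v ihu ihv => simp only [eval, ihu, ihv, hA]
  | act h t iht => simp only [eval, iht, smul_comm h g]

theorem eval_eq_bot_of_eval_generator [CommGroup F] [MulAction F A]
    (hA : ∀ (g : F) (x y : A), g • (x ⊓ y) = g • x ⊓ g • y) {o : A} (ho : ∀ x : A, o ≤ x)
    {a : A} (hgen : ∀ x : A, ∃ t : SLTerm F, t.eval a = x) {s : SLTerm F} (h : s.eval a = o)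
    (x : A) : s.eval x = o := by
  have hmono := smul_mono_of_smul_inf hA
  obtain ⟨t, rfl⟩ := hgen x
  obtain ⟨g, hg⟩ := t.exists_eval_le_smul hmono a
  refine le_antisymm ?_ (ho _)
  calc s.eval (t.eval a) ≤ s.eval (g • a) := s.eval_mono hmono hg
    _ = o := by rw [s.eval_smul hA, h, smul_eq_of_forall_le hmono ho]

end SLTerm

end

/-- If `A` is generated by `a`, has least element `o`, and `s(a) = o`, then the identity
`s(x) ⊓ y = s(x)` holds in `A`. -/
theorem stmt_5 (F : Type) [CommGroup F] (A : Type) [SemilatticeInf A] [MulAction F A]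
    (hA : ∀ (g : F) (x y : A), g • (x ⊓ y) = g • x ⊓ g • y)
    (o : A) (ho : ∀ x : A, o ≤ x)
    (a : A) (hgen : ∀ x : A, ∃ t : SLTerm F, t.eval a = x)
    (s : SLTerm F) (h : s.eval a = o) :
    ∀ x y : A, s.eval x ⊓ y = s.eval x := by
  intro x y
  rw [s.eval_eq_bot_of_eval_generator hA ho hgen h x]
  exact inf_eq_left.mpr (ho y)
end

section
/- Let A be a nontrivial 1-generated F-semilattice such that every non-least element of A generates a subalgebra isomorphic to A. If ρ is a congruence of A different from the identity congruence and from the full congruence, then the quotient A/ρ does not belong to the quasivariety generated by A. -/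
/-!
Pick `b ≠ c` with `b ρ c` and `b ≰ c`. Writing `b = s(a)` and `c = t(a)`, where `t(a)` is a meet of
translates `g • a`, some `g` has `s(a) ≰ g • a`; the term `w = g⁻¹ • s` then satisfies `w(a) ≰ a`
but `w(φ a) ≤ φ a` in the quotient. The quasi-identity `w(x) ≤ x → x ≤ y` holds in `A`: a
non-least `x` generates a copy of `A`, and since a unary term evaluates to an endomorphism,
`w(x) ≤ x` propagates to every element of `⟨x⟩`, in particular to the copy of `a`. In the
quotient it fails at `x = φ a`, which is not least because the quotient is nontrivial.
-/

def SMulDistribInf (F A : Type) [SemilatticeInf A] [SMul F A] : Prop :=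
  ∀ (g : F) (x y : A), g • (x ⊓ y) = g • x ⊓ g • y

namespace SMulDistribInf

variable {F A : Type} [Group F] [SemilatticeInf A] [MulAction F A]

theorem smul_le_smul (hA : SMulDistribInf F A) (g : F) {x y : A} (h : x ≤ y) :
    g • x ≤ g • y := by
  rw [← inf_eq_left, ← hA, inf_eq_left.mpr h]

theorem inv_smul_le_iff (hA : SMulDistribInf F A) {g : F} {x y : A} :
    g⁻¹ • x ≤ y ↔ x ≤ g • y :=
  ⟨fun h => by simpa using hA.smul_le_smul g h, fun h => by simpa using hA.smul_le_smul g⁻¹ h⟩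

theorem isBot_smul (hA : SMulDistribInf F A) (g : F) {x : A} (hx : IsBot x) : IsBot (g • x) :=
  fun y => by simpa using (hA.inv_smul_le_iff (g := g⁻¹)).2 (hx (g⁻¹ • y))

end SMulDistribInf

namespace IsHom

variable {F A B : Type} [SemilatticeInf A] [SemilatticeInf B]

theorem map_eval [SMul F A] [SMul F B] {φ : A → B} (hφ : IsHom F φ) (w : SLTerm F) (x : A) :
    φ (w.eval x) = w.eval (φ x) := by
  induction w with
  | var => rfl
  | meet s t hs ht => simp only [SLTerm.eval, hφ.1, hs, ht]
  | act f t ht => simp only [SLTerm.eval, hφ.2, ht]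

theorem map_le_map_iff [SMul F A] [SMul F B] {φ : A → B} (hφ : IsHom F φ)
    (hinj : Function.Injective φ) {x y : A} : φ x ≤ φ y ↔ x ≤ y := by
  rw [← inf_eq_left, ← hφ.1, hinj.eq_iff, inf_eq_left]

theorem smulDistribInf_of_surjective [Group F] [MulAction F A] [MulAction F B] {φ : A → B}
    (hφ : IsHom F φ) (hsurj : Function.Surjective φ) (hA : SMulDistribInf F A) :
    SMulDistribInf F B := by
  intro g x y
  obtain ⟨x, rfl⟩ := hsurj x
  obtain ⟨y, rfl⟩ := hsurj y
  simp only [← hφ.1, ← hφ.2, hA g]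

end IsHom

namespace SLTerm

section Group

variable {F : Type} [Group F]

/-- The translates `g • x` whose meet is `t.eval x`. -/
def coeffs : SLTerm F → List F
  | .var => [1]
  | .meet s t => s.coeffs ++ t.coeffs
  | .act g t => t.coeffs.map (g * ·)

variable {A : Type} [SemilatticeInf A] [MulAction F A]

theorem le_eval_iff (hA : SMulDistribInf F A) (t : SLTerm F) {d x : A} :
    d ≤ t.eval x ↔ ∀ g ∈ t.coeffs, d ≤ g • x := by
  induction t generalizing d with
  | var => simp [coeffs, eval]
  | meet s t hs ht => simp only [eval, coeffs, le_inf_iff, hs, ht, List.forall_mem_append]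
  | act f t ht =>
      simp only [eval, coeffs, List.forall_mem_map, ← hA.inv_smul_le_iff, ht, mul_inv_rev,
        ← smul_smul]

theorem eval_inf (hA : SMulDistribInf F A) (w : SLTerm F) (x y : A) :
    w.eval (x ⊓ y) = w.eval x ⊓ w.eval y := by
  induction w with
  | var => rfl
  | meet s t hs ht => simp only [eval, hs, ht, inf_inf_inf_comm]
  | act f t ht => simp only [eval, ht, hA f]

theorem eval_mono_s9 (hA : SMulDistribInf F A) (w : SLTerm F) {x y : A} (h : x ≤ y) :
    w.eval x ≤ w.eval y := by
  rw [← inf_eq_left.mpr h, eval_inf hA]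
  exact inf_le_right

theorem isBot_eval (hA : SMulDistribInf F A) (w : SLTerm F) {x : A} (hx : IsBot x) :
    IsBot (w.eval x) := by
  induction w with
  | var => exact hx
  | meet s t hs _ => exact fun y => inf_le_left.trans (hs y)
  | act f t ht => exact hA.isBot_smul f ht

end Group

section CommGroup

variable {F : Type} [CommGroup F] {A : Type} [SemilatticeInf A] [MulAction F A]

theorem eval_smul_s9 (hA : SMulDistribInf F A) (w : SLTerm F) (g : F) (x : A) :
    w.eval (g • x) = g • w.eval x := by
  induction w with
  | var => rfl
  | meet s t hs ht => simp only [eval, hs, ht, hA g]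
  | act f t ht => simp only [eval, ht, smul_smul, mul_comm]

theorem eval_eval_comm (hA : SMulDistribInf F A) (w r : SLTerm F) (x : A) :
    w.eval (r.eval x) = r.eval (w.eval x) := by
  induction r with
  | var => rfl
  | meet s t hs ht => simp only [eval, eval_inf hA, hs, ht]
  | act f t ht => simp only [eval, eval_smul_s9 hA, ht]

theorem eval_le_self_of_injective_hom {C : Type} [SemilatticeInf C] [MulAction F C]
    (hC : SMulDistribInf F C) {ψ : A → C} (hψ : IsHom F ψ) (hinj : Function.Injective ψ)
    {w : SLTerm F} {a : A} {x : C} (hax : ψ a ∈ genSet F x) (hx : w.eval x ≤ x) :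
    w.eval a ≤ a := by
  obtain ⟨r, hr⟩ := hax
  rw [← hψ.map_le_map_iff hinj, hψ.map_eval, ← hr, eval_eval_comm hC]
  exact eval_mono_s9 hC r hx

theorem exists_not_le_self_of_map_eq {B : Type} [SemilatticeInf B] [MulAction F B]
    (hA : SMulDistribInf F A) (hB : SMulDistribInf F B) {φ : A → B} (hφ : IsHom F φ)
    {s t : SLTerm F} {a : A} (hst : ¬ s.eval a ≤ t.eval a)
    (heq : φ (s.eval a) = φ (t.eval a)) :
    ∃ w : SLTerm F, ¬ w.eval a ≤ a ∧ w.eval (φ a) ≤ φ a := by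
  obtain ⟨g, hg, hsg⟩ : ∃ g ∈ t.coeffs, ¬ s.eval a ≤ g • a := by
    simpa using mt (le_eval_iff hA t).2 hst
  refine ⟨.act g⁻¹ s, mt hA.inv_smul_le_iff.1 hsg, hB.inv_smul_le_iff.2 ?_⟩
  rw [← hφ.map_eval, heq, hφ.map_eval]
  exact (le_eval_iff hB t).1 le_rfl g hg

end CommGroup

def toTermN {F : Type} : SLTerm F → SLTermN F
  | .var => .var 0
  | .meet s t => .meet s.toTermN t.toTermN
  | .act g t => .act g t.toTermN

variable {F C : Type} [SemilatticeInf C] [SMul F C]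

theorem eval_toTermN (w : SLTerm F) (v : ℕ → C) : w.toTermN.eval v = w.eval (v 0) := by
  induction w with
  | var => rfl
  | meet s t hs ht => simp only [toTermN, SLTermN.eval, eval, hs, ht]
  | act f t ht => simp only [toTermN, SLTermN.eval, eval, ht]

/-- The quasi-identity `w(x₀) ≤ x₀ → x₀ ≤ x₁`. -/
theorem satQI_iff_forall_isBot (w : SLTerm F) :
    SatQI F C [(.meet w.toTermN (.var 0), w.toTermN)] (.meet (.var 0) (.var 1), .var 0) ↔
      ∀ x : C, w.eval x ≤ x → IsBot x := by
  simp only [SatQI, List.forall_mem_singleton, SLTermN.eval, eval_toTermN, inf_eq_left]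
  constructor
  · intro h x hx y
    simpa using h (fun n => if n = 0 then x else y) (by simpa using hx)
  · exact fun h v hv => h (v 0) hv (v 1)

end SLTerm

/-- The quotient `A/ρ` is represented by a surjective homomorphism `φ : A → B` with kernel `ρ`. -/
theorem stmt_9_general (F : Type) [CommGroup F] (A : Type) [SemilatticeInf A] [MulAction F A]
    (hA : ∀ (g : F) (x y : A), g • (x ⊓ y) = g • x ⊓ g • y)
    (a : A) (hgen : ∀ x : A, ∃ t : SLTerm F, t.eval a = x)
    (hsub : ∀ b : A, ¬ IsBot b →
      ∃ φ : A → A, Function.Injective φ ∧ Set.range φ = genSet F b ∧ IsHom F φ)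
    (ρ : A → A → Prop)
    (hne_id : ∃ b c : A, ρ b c ∧ b ≠ c) (hne_full : ∃ b c : A, ¬ ρ b c) :
    ∀ (B : Type) [SemilatticeInf B] [MulAction F B] (φ : A → B),
      Function.Surjective φ → IsHom F φ → (∀ x y : A, φ x = φ y ↔ ρ x y) →
      ¬ InQ F A B := by
  intro B _ _ φ hsurj hφ hker hInQ
  have hB : SMulDistribInf F B := hφ.smulDistribInf_of_surjective hsurj hA
  obtain ⟨b, c, hbc, hnle⟩ : ∃ b c : A, φ b = φ c ∧ ¬ b ≤ c := by
    obtain ⟨b, c, hbc, hne⟩ := hne_id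
    by_cases hle : b ≤ c
    · exact ⟨c, b, ((hker b c).2 hbc).symm, fun h => hne (le_antisymm hle h)⟩
    · exact ⟨b, c, (hker b c).2 hbc, hle⟩
  obtain ⟨s, rfl⟩ := hgen b
  obtain ⟨t, rfl⟩ := hgen c
  obtain ⟨w, hwa, hwφa⟩ := SLTerm.exists_not_le_self_of_map_eq hA hB hφ hnle hbc
  have hQA := (SLTerm.satQI_iff_forall_isBot (C := A) w).2 fun x hx => by
    by_contra hx_bot
    obtain ⟨ψ, hinj, hrange, hψ⟩ := hsub x hx_bot
    exact hwa (SLTerm.eval_le_self_of_injective_hom hA hψ hinj (hrange ▸ ⟨a, rfl⟩) hx)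
  have hφa : IsBot (φ a) := (SLTerm.satQI_iff_forall_isBot w).1 (hInQ _ _ hQA) (φ a) hwφa
  obtain ⟨b', c', hb'c'⟩ := hne_full
  obtain ⟨u, rfl⟩ := hgen b'
  obtain ⟨v, rfl⟩ := hgen c'
  refine hb'c' ((hker _ _).1 (le_antisymm ?_ ?_)) <;>
    simp only [hφ.map_eval] <;> exact SLTerm.isBot_eval hB _ hφa _

/-- A proper nontrivial quotient of such an `A` does not belong to the quasivariety
generated by `A`.  (The quotient `A/ρ` is represented, via the homomorphism theorem, by an
algebra `B` together with a surjective homomorphism `A → B` whose kernel is `ρ`.) -/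
theorem stmt_9 (F : Type) [CommGroup F] (A : Type) [SemilatticeInf A] [MulAction F A]
    (hA : ∀ (g : F) (x y : A), g • (x ⊓ y) = g • x ⊓ g • y)
    (hnt : Nontrivial A)
    (a : A) (hgen : ∀ x : A, ∃ t : SLTerm F, t.eval a = x)
    (hsub : ∀ b : A, ¬ IsBot b →
      ∃ φ : A → A, Function.Injective φ ∧ Set.range φ = genSet F b ∧ IsHom F φ)
    (ρ : A → A → Prop) (hequiv : Equivalence ρ)
    (hcong_inf : ∀ {x y u v : A}, ρ x y → ρ u v → ρ (x ⊓ u) (y ⊓ v))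
    (hcong_smul : ∀ (g : F) {x y : A}, ρ x y → ρ (g • x) (g • y))
    (hne_id : ∃ b c : A, ρ b c ∧ b ≠ c) (hne_full : ∃ b c : A, ¬ ρ b c) :
    ∀ (B : Type) [SemilatticeInf B] [MulAction F B] (φ : A → B),
      Function.Surjective φ → IsHom F φ → (∀ x y : A, φ x = φ y ↔ ρ x y) →
      ¬ InQ F A B :=
  stmt_9_general F A hA a hgen hsub ρ hne_id hne_full
end

section
/- The twisted-multiple F-semilattice B(K,F,U) = {o} ∪ (U × T) constructed from a subgroup K ≤ F, a transversal T of K, and a K-semilattice U, is independent, up to F-semilattice isomorphism, of the choice of the transversal T. -/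
open Pointwise

/-- `T` is a transversal of the cosets of `K` in `F`: it meets each coset in exactly one
element. -/
def IsTransversal (F : Type) [CommGroup F] (K : Subgroup F) (T : Set F) : Prop :=
  ∀ g : F, ∃! t : F, t ∈ T ∧ t ∈ g • (K : Set F)

/-- `inf` and `smul` make `A` into an `F`-semilattice (axioms (i)–(iv)). -/
def IsFSemilatticeOps (F A : Type) [CommGroup F] (inf : A → A → A) (smul : F → A → A) : Prop :=
  (∀ x y, inf x y = inf y x) ∧ (∀ x y z, inf (inf x y) z = inf x (inf y z)) ∧
  (∀ x, inf x x = x) ∧ (∀ x, smul 1 x = x) ∧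
  (∀ (f g : F) (x), smul f (smul g x) = smul (f * g) x) ∧
  (∀ (g : F) (x y), smul g (inf x y) = inf (smul g x) (smul g y))

/-- The defining equations of the twisted multiple `B(K,F,U)` on `{o} ∪ (U × T)`
(with `none` playing the role of `o`):  `(u,t) ∧ (v,t) = (u ⊓ v, t)`,
`(u,t₁) ∧ (v,t₂) = o` for `t₁ ≠ t₂`, `x ∧ o = o ∧ x = o`, `g(o) = o`, and
`g(u,t) = (gtf⁻¹(u), f)` where `f` is the unique element of `T ∩ gtK`. -/
def TwistedSpec (F : Type) [CommGroup F] (K : Subgroup F) (T : Set F)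
    (U : Type) [SemilatticeInf U] [MulAction K U]
    (inf : Option (U × T) → Option (U × T) → Option (U × T))
    (smul : F → Option (U × T) → Option (U × T)) : Prop :=
  (∀ (u v : U) (t : T), inf (some (u, t)) (some (v, t)) = some (u ⊓ v, t)) ∧
  (∀ (u v : U) (t₁ t₂ : T), t₁ ≠ t₂ → inf (some (u, t₁)) (some (v, t₂)) = none) ∧
  (∀ x, inf x none = none) ∧ (∀ x, inf none x = none) ∧
  (∀ g : F, smul g none = none) ∧
  (∀ (g : F) (u : U) (t : T) (f : F) (hfT : f ∈ T)
      (_ : f ∈ (g * (t : F)) • (K : Set F)) (hk : g * (t : F) * f⁻¹ ∈ K),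
      smul g (some (u, t)) = some ((⟨g * (t : F) * f⁻¹, hk⟩ : K) • u, ⟨f, hfT⟩))

/-! Send `(u,t)` to `(t′⁻¹t(u), t′)`, where `t′ ∈ T′` represents `tK`; this is a bijection because
`t ↦ t′` is a bijection `T ≃ T′`. It respects meets since each `t′⁻¹t ∈ K` acts by a semilattice
automorphism, and it respects the action because the twists are compatible: writing `f`, `f′`
for the representatives of `gtK` in `T`, `T′`, both `f′⁻¹f · gtf⁻¹` and `gt′f′⁻¹ · t′⁻¹t` equal
`gtf′⁻¹`. -/

namespace IsTransversal

variable {F : Type} [CommGroup F] {K : Subgroup F} {T T' : Set F}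

noncomputable def rep (hT : IsTransversal F K T) (g : F) : F :=
  (hT g).exists.choose

variable (hT : IsTransversal F K T) (hT' : IsTransversal F K T')

theorem rep_mem (g : F) : hT.rep g ∈ T :=
  (hT g).exists.choose_spec.1

theorem inv_mul_rep_mem (g : F) : g⁻¹ * hT.rep g ∈ K :=
  (mem_leftCoset_iff g).1 (hT g).exists.choose_spec.2

theorem eq_rep {g t : F} (ht : t ∈ T) (h : g⁻¹ * t ∈ K) : t = hT.rep g :=
  (hT g).unique ⟨ht, (mem_leftCoset_iff g).2 h⟩ (hT g).exists.choose_spec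

theorem rep_eq_rep {g h : F} (hgh : g⁻¹ * h ∈ K) : hT.rep g = hT.rep h :=
  hT.eq_rep (hT.rep_mem g) <| by
    simpa [mul_assoc] using K.mul_mem (K.inv_mem hgh) (hT.inv_mul_rep_mem g)

theorem rep_rep (g : F) : hT'.rep (hT.rep g) = hT'.rep g :=
  hT'.rep_eq_rep <| by simpa using K.inv_mem (hT.inv_mul_rep_mem g)

theorem rep_mul_rep (g h : F) : hT.rep (g * hT.rep h) = hT.rep (g * h) :=
  hT.rep_eq_rep <| by
    simpa [mul_inv_rev, mul_assoc] using K.inv_mem (hT.inv_mul_rep_mem h)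

/-- At `g = t ∈ T` this is the twist `t′⁻¹t` of the isomorphism `(u,t) ↦ (t′⁻¹t(u), t′)`; at
`g = gt` it is the element `gtf⁻¹` in the action `g(u,t) = (gtf⁻¹(u), f)`. -/
noncomputable def cosetShift (g : F) : K :=
  ⟨g * (hT.rep g)⁻¹, by simpa [mul_comm] using K.inv_mem (hT.inv_mul_rep_mem g)⟩

theorem cosetShift_rep_mul_cosetShift (g : F) :
    hT'.cosetShift (hT.rep g) * hT.cosetShift g = hT'.cosetShift g := by
  ext
  simp only [cosetShift, Subgroup.coe_mul, hT.rep_rep hT']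
  simp [mul_comm, mul_assoc, mul_left_comm]

theorem cosetShift_mul_rep_mul_cosetShift (g h : F) :
    hT.cosetShift (g * hT.rep h) * hT.cosetShift h = hT.cosetShift (g * h) := by
  ext
  simp only [cosetShift, Subgroup.coe_mul, hT.rep_mul_rep]
  simp [mul_comm, mul_assoc, mul_left_comm]

noncomputable def equiv : T ≃ T' where
  toFun t := ⟨hT'.rep t, hT'.rep_mem t⟩
  invFun s := ⟨hT.rep s, hT.rep_mem s⟩
  left_inv t := Subtype.ext <| (hT.eq_rep t.2 <| by
    simpa using K.inv_mem (hT'.inv_mul_rep_mem t)).symm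
  right_inv s := Subtype.ext <| (hT'.eq_rep s.2 <| by
    simpa using K.inv_mem (hT.inv_mul_rep_mem s)).symm

end IsTransversal

section TwistedMultiple

variable {F : Type} [CommGroup F] {K : Subgroup F} {T T' : Set F}
  {U : Type} [MulAction K U]

def twistEquiv (σ : T ≃ T') (k : T → K) : U × T ≃ U × T' where
  toFun p := (k p.2 • p.1, σ p.2)
  invFun q := ((k (σ.symm q.2))⁻¹ • q.1, σ.symm q.2)
  left_inv p := by simp
  right_inv q := by simp

@[simp]
theorem twistEquiv_apply (σ : T ≃ T') (k : T → K) (u : U) (t : T) :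
    twistEquiv σ k (u, t) = (k t • u, σ t) :=
  rfl

namespace TwistedSpec

variable [SemilatticeInf U] {inf : Option (U × T) → Option (U × T) → Option (U × T)}
  {smul : F → Option (U × T) → Option (U × T)}
  {inf' : Option (U × T') → Option (U × T') → Option (U × T')}
  {smul' : F → Option (U × T') → Option (U × T')}

theorem smul_some (hspec : TwistedSpec F K T U inf smul) (hT : IsTransversal F K T)
    (g : F) (u : U) (t : T) :
    smul g (some (u, t)) = some (hT.cosetShift (g * t) • u, ⟨hT.rep (g * t), hT.rep_mem _⟩) :=
  hspec.2.2.2.2.2 g u t _ (hT.rep_mem _) ((mem_leftCoset_iff _).2 (hT.inv_mul_rep_mem _)) _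

theorem map_inf (hspec : TwistedSpec F K T U inf smul) (hspec' : TwistedSpec F K T' U inf' smul')
    (hU : ∀ (k : K) (x y : U), k • (x ⊓ y) = k • x ⊓ k • y) (σ : T ≃ T') (k : T → K)
    (x y : Option (U × T)) :
    (inf x y).map (twistEquiv σ k) = inf' (x.map (twistEquiv σ k)) (y.map (twistEquiv σ k)) := by
  obtain ⟨hmeet, hne, hnone_right, hnone_left, -⟩ := hspec
  obtain ⟨hmeet', hne', hnone_right', hnone_left', -⟩ := hspec'
  rcases x with _ | ⟨u, t₁⟩ <;> rcases y with _ | ⟨v, t₂⟩ <;>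
    simp only [Option.map_none, Option.map_some, twistEquiv_apply, hnone_right, hnone_left,
      hnone_right', hnone_left']
  by_cases h : t₁ = t₂
  · subst h
    simp [hmeet, hmeet', hU]
  · rw [hne u v t₁ t₂ h, hne' _ _ _ _ (σ.injective.ne h), Option.map_none]

theorem map_smul (hspec : TwistedSpec F K T U inf smul) (hspec' : TwistedSpec F K T' U inf' smul')
    (hT : IsTransversal F K T) (hT' : IsTransversal F K T') (g : F) (x : Option (U × T)) :
    (smul g x).map (twistEquiv (hT.equiv hT') fun t => hT'.cosetShift t) =
      smul' g (x.map (twistEquiv (hT.equiv hT') fun t => hT'.cosetShift t)) := by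
  rcases x with _ | ⟨u, t⟩
  · simp only [Option.map_none, hspec.2.2.2.2.1, hspec'.2.2.2.2.1]
  · rw [hspec.smul_some hT, Option.map_some, Option.map_some, twistEquiv_apply, twistEquiv_apply,
      hspec'.smul_some hT']
    simp [IsTransversal.equiv, smul_smul, hT.cosetShift_rep_mul_cosetShift hT',
      hT'.cosetShift_mul_rep_mul_cosetShift, hT.rep_rep hT', hT'.rep_mul_rep]

end TwistedSpec

end TwistedMultiple

theorem stmt_15_general (F : Type) [CommGroup F] (K : Subgroup F) (T T' : Set F)
    (hT : IsTransversal F K T) (hT' : IsTransversal F K T')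
    (U : Type) [SemilatticeInf U] [MulAction K U]
    (hU : ∀ (k : K) (x y : U), k • (x ⊓ y) = k • x ⊓ k • y)
    (inf : Option (U × T) → Option (U × T) → Option (U × T))
    (smul : F → Option (U × T) → Option (U × T))
    (hspec : TwistedSpec F K T U inf smul)
    (inf' : Option (U × T') → Option (U × T') → Option (U × T'))
    (smul' : F → Option (U × T') → Option (U × T'))
    (hspec' : TwistedSpec F K T' U inf' smul') :
    ∃ φ : Option (U × T) → Option (U × T'),
      Function.Bijective φ ∧ φ none = none ∧
      (∀ x y, φ (inf x y) = inf' (φ x) (φ y)) ∧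
      (∀ (g : F) (x), φ (smul g x) = smul' g (φ x)) :=
  let e : U × T ≃ U × T' := twistEquiv (hT.equiv hT') fun t => hT'.cosetShift t
  ⟨Option.map e, e.optionCongr.bijective, rfl, hspec.map_inf hspec' hU _ _,
    hspec.map_smul hspec' hT hT'⟩

/-- Up to `F`-semilattice isomorphism, the twisted multiple `B(K,F,U)` does not depend on
the choice of the transversal. -/
theorem stmt_15 (F : Type) [CommGroup F] (K : Subgroup F) (T T' : Set F)
    (hT : IsTransversal F K T) (hT' : IsTransversal F K T')
    (U : Type) [SemilatticeInf U] [MulAction K U]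
    (hU : ∀ (k : K) (x y : U), k • (x ⊓ y) = k • x ⊓ k • y)
    (inf : Option (U × T) → Option (U × T) → Option (U × T))
    (smul : F → Option (U × T) → Option (U × T))
    (hops : IsFSemilatticeOps F (Option (U × T)) inf smul)
    (hspec : TwistedSpec F K T U inf smul)
    (inf' : Option (U × T') → Option (U × T') → Option (U × T'))
    (smul' : F → Option (U × T') → Option (U × T'))
    (hops' : IsFSemilatticeOps F (Option (U × T')) inf' smul')
    (hspec' : TwistedSpec F K T' U inf' smul') :
    ∃ φ : Option (U × T) → Option (U × T'),
      Function.Bijective φ ∧ φ none = none ∧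
      (∀ x y, φ (inf x y) = inf' (φ x) (φ y)) ∧
      (∀ (g : F) (x), φ (smul g x) = smul' g (φ x)) :=
  stmt_15_general F K T T' hT hT' U hU inf smul hspec inf' smul' hspec'
end

section
/- Let F be a finite abelian group. The map sending a minimal quasivariety R of F-semilattices to the stabilizer H_R = {g ∈ F : g(a) = a} of the free generator a of the 1-generated free algebra of R is a bijection from the set of minimal quasivarieties of F-semilattices onto the set of subgroups of F; its inverse sends a subgroup H to the quasivariety generated by the Maróti semilattice M(H,F). -/
open Pointwise

/-- The universe of the Maróti semilattice: the empty set together with all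
left cosets of `H`. -/
def Maroti (F : Type) [CommGroup F] (H : Subgroup F) : Type :=
  {S : Set F // S = ∅ ∨ ∃ g : F, S = g • (H : Set F)}

namespace Maroti

variable {F : Type} [CommGroup F] {H : Subgroup F}

theorem coset_eq_of_mem {g₁ g₂ x : F} (h1 : x ∈ g₁ • (H : Set F))
    (h2 : x ∈ g₂ • (H : Set F)) : g₁ • (H : Set F) = g₂ • (H : Set F) := by
  rw [Set.mem_smul_set_iff_inv_smul_mem, smul_eq_mul] at h1 h2
  ext z
  simp only [Set.mem_smul_set_iff_inv_smul_mem, smul_eq_mul]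
  constructor
  · intro hz
    have : g₂⁻¹ * z = (g₂⁻¹ * x) * (g₁⁻¹ * x)⁻¹ * (g₁⁻¹ * z) := by group
    rw [this]
    exact H.mul_mem (H.mul_mem h2 (H.inv_mem h1)) hz
  · intro hz
    have : g₁⁻¹ * z = (g₁⁻¹ * x) * (g₂⁻¹ * x)⁻¹ * (g₂⁻¹ * z) := by group
    rw [this]
    exact H.mul_mem (H.mul_mem h1 (H.inv_mem h2)) hz

theorem inter_mem {S T : Set F} (hS : S = ∅ ∨ ∃ g : F, S = g • (H : Set F))
    (hT : T = ∅ ∨ ∃ g : F, T = g • (H : Set F)) :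
    S ∩ T = ∅ ∨ ∃ g : F, S ∩ T = g • (H : Set F) := by
  rcases hS with rfl | ⟨g₁, rfl⟩
  · left; simp
  rcases hT with rfl | ⟨g₂, rfl⟩
  · left; simp
  rcases Set.eq_empty_or_nonempty (g₁ • (H : Set F) ∩ g₂ • (H : Set F)) with he | ⟨x, hx₁, hx₂⟩
  · left; exact he
  · right
    refine ⟨g₂, ?_⟩
    rw [coset_eq_of_mem hx₁ hx₂, Set.inter_self]

instance : Min (Maroti F H) :=
  ⟨fun x y => ⟨x.1 ∩ y.1, inter_mem x.2 y.2⟩⟩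

theorem inf_val (x y : Maroti F H) : (x ⊓ y).1 = x.1 ∩ y.1 := rfl

instance : SemilatticeInf (Maroti F H) :=
  SemilatticeInf.mk' (fun x y => Subtype.ext (Set.inter_comm x.1 y.1))
    (fun x y z => Subtype.ext (Set.inter_assoc x.1 y.1 z.1))
    (fun x => Subtype.ext (Set.inter_self x.1))

noncomputable instance : SMul F (Maroti F H) :=
  ⟨fun g x => ⟨g • x.1, by
    rcases x.2 with h | ⟨g', h⟩
    · left; rw [h]; exact Set.smul_set_empty
    · right; exact ⟨g * g', by rw [h, smul_smul]⟩⟩⟩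

theorem smul_val (g : F) (x : Maroti F H) : (g • x).1 = g • x.1 := rfl

noncomputable instance : MulAction F (Maroti F H) where
  one_smul x := Subtype.ext (one_smul F x.1)
  mul_smul g h x := Subtype.ext (mul_smul g h x.1)

end Maroti

/-- The distinguished generator `1 • H` of the Maróti semilattice. -/
noncomputable def marotiGen (F : Type) [CommGroup F] (H : Subgroup F) : Maroti F H :=
  ⟨(1 : F) • (H : Set F), Or.inr ⟨1, rfl⟩⟩

/-!
Every nontrivial `F`-semilattice `B` (with `F` finite) contains a *flat orbit*: an element `x`
and an `F`-fixed element `⊥ < x` such that distinct translates of `x` meet in `⊥`. Take `⊥` least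
and `x` minimal above `⊥` in the finite, `F`-invariant inf-closure of the orbits of a pair
`c < a`: then `x ⊓ g • x` is either `⊥` or, by minimality applied to `g` and `g⁻¹`, forces
`g • x = x`. A flat orbit spans a copy of `M(Stab x, F)` inside `B`, so `M(Stab x, F) ∈ Q(B)`.
On the other side, `M(H, F)` satisfies the identities `h • u = u` (`h ∈ H`) and the
quasi-identities `g • u = u → u ⊓ v = u` (`g ∉ H`); inherited by a nontrivial `B ∈ Q(M(H, F))`,
they force `Stab x = H` for every flat orbit of `B`, whence `Q(B) = Q(M(H, F))`. If `A` is
generated by `a`, then `Stab a` acts trivially on all of `A`, which pins it down as that `H`.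
-/

open Pointwise MulAction Function

variable {F : Type}

section Terms

variable {A C : Type} [SemilatticeInf A] [SemilatticeInf C]

theorem IsHom.eval_comp [SMul F A] [SMul F C] {φ : C → A} (hφ : IsHom F φ) (t : SLTermN F)
    (v : ℕ → C) : t.eval (φ ∘ v) = φ (t.eval v) := by
  induction t with
  | var n => rfl
  | meet s t ihs iht => rw [SLTermN.eval, SLTermN.eval, ihs, iht, hφ.1]
  | act g t ih => rw [SLTermN.eval, SLTermN.eval, ih, hφ.2]

theorem InQ.of_injective [SMul F A] [SMul F C] {φ : C → A} (hφ : IsHom F φ)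
    (hinj : Injective φ) : InQ F A C := by
  intro prem c hA v hv
  apply hinj
  rw [← hφ.eval_comp, ← hφ.eval_comp]
  exact hA _ fun p hp => by rw [hφ.eval_comp, hφ.eval_comp, hv p hp]

theorem InQ.smul_eq_self [SMul F A] [SMul F C] (hQ : InQ F C A) {g : F}
    (hC : ∀ u : C, g • u = u) (u : A) : g • u = u := by
  have hsat : SatQI F C [] (.act g (.var 0), .var 0) := fun v _ => hC (v 0)
  exact hQ _ _ hsat (fun _ => u) (by simp)

theorem InQ.inf_eq_left_of_smul_eq [SMul F A] [SMul F C] (hQ : InQ F C A) {g : F}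
    (hC : ∀ u : C, g • u = u → ∀ v, u ⊓ v = u) {u : A} (hu : g • u = u) (v : A) : u ⊓ v = u := by
  have hsat : SatQI F C [(.act g (.var 0), .var 0)] (.meet (.var 0) (.var 1), .var 0) :=
    fun w hw => hC (w 0) (hw _ List.mem_cons_self) (w 1)
  exact hQ _ _ hsat (fun n => if n = 0 then u else v) (by simpa [SLTermN.eval] using hu)

theorem SLTerm.eval_smul_s17 [CommGroup F] [MulAction F A]
    (hd : ∀ (g : F) (x y : A), g • (x ⊓ y) = g • x ⊓ g • y) (t : SLTerm F) (g : F) (a : A) :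
    t.eval (g • a) = g • t.eval a := by
  induction t with
  | var => rfl
  | meet s t ihs iht => rw [SLTerm.eval, SLTerm.eval, ihs, iht, hd]
  | act k t ih => rw [SLTerm.eval, SLTerm.eval, ih, smul_smul, mul_comm, ← smul_smul]

end Terms

variable [CommGroup F]

namespace Maroti

variable {H : Subgroup F}

instance : Nontrivial (Maroti F H) :=
  ⟨⟨⟨∅, Or.inl rfl⟩, marotiGen F H, fun h => by
    simpa [marotiGen] using congrArg (fun u : Maroti F H => (1 : F) ∈ u.1) h⟩⟩

theorem smul_inf (g : F) (u v : Maroti F H) : g • (u ⊓ v) = g • u ⊓ g • v :=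
  Subtype.ext Set.smul_set_inter

theorem val_eq_smul_of_mem {u : Maroti F H} {k : F} (hk : k ∈ u.1) : u.1 = k • (H : Set F) := by
  rcases u.2 with hu | ⟨g, hu⟩
  · exact absurd (hu ▸ hk) (Set.notMem_empty k)
  · rw [hu] at hk ⊢
    exact coset_eq_of_mem hk (mem_own_leftCoset H.toSubmonoid k)

theorem smul_eq_self_of_mem {h : F} (hh : h ∈ H) (u : Maroti F H) : h • u = u := by
  apply Subtype.ext
  rw [smul_val]
  rcases u.1.eq_empty_or_nonempty with hu | ⟨k, hk⟩
  · rw [hu, Set.smul_set_empty]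
  · rw [val_eq_smul_of_mem hk, smul_smul, leftCoset_eq_iff, mul_comm h k, mul_inv_rev,
      inv_mul_cancel_right]
    exact H.inv_mem hh

theorem stabilizer_marotiGen (H : Subgroup F) : stabilizer F (marotiGen F H) = H := by
  ext g
  refine ⟨fun hg => ?_, fun hg => smul_eq_self_of_mem hg _⟩
  have hval : (g • marotiGen F H).1 = (marotiGen F H).1 := by rw [mem_stabilizer_iff.1 hg]
  change g • ((1 : F) • (H : Set F)) = (1 : F) • (H : Set F) at hval
  rw [smul_smul, leftCoset_eq_iff] at hval
  simpa using hval

theorem forall_smul_eq_self_iff {h : F} : (∀ u : Maroti F H, h • u = u) ↔ h ∈ H :=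
  ⟨fun hu => stabilizer_marotiGen H ▸ mem_stabilizer_iff.2 (hu _), smul_eq_self_of_mem⟩

theorem inf_eq_left_of_smul_eq {g : F} (hg : g ∉ H) {u : Maroti F H} (hu : g • u = u)
    (v : Maroti F H) : u ⊓ v = u := by
  rcases u.1.eq_empty_or_nonempty with hu₀ | ⟨k, hk⟩
  · exact Subtype.ext (by rw [inf_val, hu₀, Set.empty_inter])
  · have hgk : g * k ∈ u.1 := congrArg Subtype.val hu ▸ Set.smul_mem_smul_set hk
    rw [val_eq_smul_of_mem hk, mem_leftCoset_iff, mul_comm g k, inv_mul_cancel_left] at hgk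
    exact absurd hgk hg

end Maroti

section FlatOrbit

variable {B : Type} [SemilatticeInf B] [MulAction F B]

theorem smul_mono_of_smul_inf_s17 (hd : ∀ (g : F) (x y : B), g • (x ⊓ y) = g • x ⊓ g • y) (g : F)
    {x y : B} (h : x ≤ y) : g • x ≤ g • y := by
  rw [← inf_eq_left] at h ⊢
  rw [← hd, h]

theorem smul_eq_self_of_le_smul (hd : ∀ (g : F) (x y : B), g • (x ⊓ y) = g • x ⊓ g • y)
    {g : F} {y : B} (h : y ≤ g • y) (h' : y ≤ g⁻¹ • y) : g • y = y :=
  le_antisymm (by simpa using smul_mono_of_smul_inf_s17 hd g h') h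

structure IsFlatOrbit (F : Type) {B : Type} [SemilatticeInf B] [SMul F B] (x bot : B) : Prop where
  smul_bot : ∀ g : F, g • bot = bot
  bot_lt_smul : ∀ g : F, bot < g • x
  smul_inf_smul : ∀ g g' : F, g • x ≠ g' • x → g • x ⊓ g' • x = bot

theorem isFlatOrbit_of_minimal (hd : ∀ (g : F) (x y : B), g • (x ⊓ y) = g • x ⊓ g • y)
    {Z : Set B} (hZ : InfClosed Z) (hZ_smul : ∀ (g : F), ∀ z ∈ Z, g • z ∈ Z) {x bot : B}
    (hbot : ∀ g : F, g • bot = bot) (hx : Minimal (fun z => z ∈ Z ∧ bot < z) x) :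
    IsFlatOrbit F x bot := by
  have bot_lt_smul (g : F) : bot < g • x := by
    refine lt_of_le_of_ne (hbot g ▸ smul_mono_of_smul_inf_s17 hd g hx.1.2.le) fun h => hx.1.2.ne ?_
    rw [← inv_smul_smul g x, ← h, hbot]
  have le_smul (g : F) (hne : x ⊓ g • x ≠ bot) : x ≤ g • x :=
    (hx.2 ⟨hZ hx.1.1 (hZ_smul g x hx.1.1),
      lt_of_le_of_ne (le_inf hx.1.2.le (bot_lt_smul g).le) hne.symm⟩ inf_le_left).trans
      inf_le_right
  have smul_eq (g : F) (hne : x ⊓ g • x ≠ bot) : g • x = x := by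
    refine smul_eq_self_of_le_smul hd (le_smul g hne) (le_smul g⁻¹ fun h => hne ?_)
    rw [← hbot g, ← h, hd, smul_inv_smul, inf_comm]
  refine ⟨hbot, bot_lt_smul, fun g g' hne => ?_⟩
  have hflat : x ⊓ (g⁻¹ * g') • x = bot := by
    by_contra h
    have hgg' := congrArg (g • ·) (smul_eq _ h)
    simp only [smul_smul, mul_inv_cancel_left] at hgg'
    exact hne hgg'.symm
  rw [← hbot g, ← hflat, hd, mul_smul, smul_inv_smul]

theorem exists_lt_of_nontrivial [Nontrivial B] : ∃ c a : B, c < a := by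
  obtain ⟨u, v, huv⟩ := exists_pair_ne B
  by_cases h : u ⊓ v = u
  · exact ⟨u, v, lt_of_le_of_ne (inf_eq_left.1 h) huv⟩
  · exact ⟨u ⊓ v, u, lt_of_le_of_ne inf_le_left h⟩

theorem infClosure_smul_mem (hd : ∀ (g : F) (x y : B), g • (x ⊓ y) = g • x ⊓ g • y)
    {S : Set B} (hS : ∀ (g : F), ∀ y ∈ S, g • y ∈ S) (g : F) :
    ∀ z ∈ infClosure S, g • z ∈ infClosure S :=
  infClosure_min (t := {z | g • z ∈ infClosure S}) (fun y hy => subset_infClosure (hS g y hy))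
    fun y hy z hz => by
      change g • (y ⊓ z) ∈ infClosure S
      exact hd g y z ▸ infClosed_infClosure hy hz

theorem exists_isFlatOrbit [Finite F] [Nontrivial B]
    (hd : ∀ (g : F) (x y : B), g • (x ⊓ y) = g • x ⊓ g • y) :
    ∃ x bot : B, IsFlatOrbit F x bot := by
  obtain ⟨c, a, hca⟩ := exists_lt_of_nontrivial (B := B)
  set Z := infClosure (Set.range (fun g : F => g • a) ∪ Set.range (fun g : F => g • c))
  have hZ_fin : Z.Finite := ((Set.finite_range _).union (Set.finite_range _)).infClosure
  have hZ_smul : ∀ (g : F), ∀ z ∈ Z, g • z ∈ Z := by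
    refine infClosure_smul_mem hd ?_
    rintro g _ (⟨k, rfl⟩ | ⟨k, rfl⟩)
    exacts [Or.inl ⟨g * k, mul_smul g k a⟩, Or.inr ⟨g * k, mul_smul g k c⟩]
  have ha : a ∈ Z := subset_infClosure (Or.inl ⟨1, one_smul F a⟩)
  have hc : c ∈ Z := subset_infClosure (Or.inr ⟨1, one_smul F c⟩)
  obtain ⟨bot, hbot⟩ := hZ_fin.exists_minimal ⟨a, ha⟩
  have bot_le {z : B} (hz : z ∈ Z) : bot ≤ z :=
    (hbot.2 (infClosed_infClosure hbot.1 hz) inf_le_left).trans inf_le_right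
  have smul_bot (g : F) : g • bot = bot :=
    smul_eq_self_of_le_smul hd (bot_le (hZ_smul g _ hbot.1)) (bot_le (hZ_smul g⁻¹ _ hbot.1))
  obtain ⟨x, hx⟩ := (hZ_fin.subset fun z (hz : z ∈ Z ∧ bot < z) => hz.1).exists_minimal
    ⟨a, ha, (bot_le hc).trans_lt hca⟩
  exact ⟨x, bot, isFlatOrbit_of_minimal hd infClosed_infClosure hZ_smul smul_bot hx⟩

end FlatOrbit

namespace Maroti

variable {B : Type} [MulAction F B] {x bot : B}

open Classical in
noncomputable def orbitMap {H : Subgroup F} (x bot : B) (u : Maroti F H) : B :=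
  if h : u.1.Nonempty then h.some • x else bot

theorem mem_iff_smul_eq {u : Maroti F (stabilizer F x)} {k k' : F} (hk : k ∈ u.1) :
    k' ∈ u.1 ↔ k' • x = k • x := by
  rw [val_eq_smul_of_mem hk, mem_leftCoset_iff, SetLike.mem_coe, mem_stabilizer_iff, mul_smul,
    inv_smul_eq_iff]

theorem orbitMap_of_mem {u : Maroti F (stabilizer F x)} {k : F} (hk : k ∈ u.1) :
    orbitMap x bot u = k • x := by
  rw [orbitMap, dif_pos ⟨k, hk⟩]
  exact (mem_iff_smul_eq hk).1 (Set.Nonempty.some_mem _)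

theorem orbitMap_of_empty {H : Subgroup F} {u : Maroti F H} (hu : u.1 = ∅) :
    orbitMap x bot u = bot := by
  rw [orbitMap, dif_neg (Set.not_nonempty_iff_eq_empty.2 hu)]

variable [SemilatticeInf B]

theorem bot_le_orbitMap (hx : IsFlatOrbit F x bot) (u : Maroti F (stabilizer F x)) :
    bot ≤ orbitMap x bot u := by
  rcases u.1.eq_empty_or_nonempty with hu | ⟨k, hk⟩
  · rw [orbitMap_of_empty hu]
  · rw [orbitMap_of_mem hk]
    exact (hx.bot_lt_smul k).le

theorem isHom_orbitMap (hx : IsFlatOrbit F x bot) :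
    IsHom F (orbitMap (H := stabilizer F x) x bot) := by
  refine ⟨fun u v => ?_, fun g u => ?_⟩
  · rcases (u ⊓ v).1.eq_empty_or_nonempty with huv | ⟨k, hku, hkv⟩
    · rw [orbitMap_of_empty huv]
      rcases u.1.eq_empty_or_nonempty with hu | ⟨k, hk⟩
      · rw [orbitMap_of_empty hu, inf_eq_left.2 (bot_le_orbitMap hx v)]
      rcases v.1.eq_empty_or_nonempty with hv | ⟨k', hk'⟩
      · rw [orbitMap_of_empty hv, inf_eq_right.2 (bot_le_orbitMap hx u)]
      rw [orbitMap_of_mem hk, orbitMap_of_mem hk', hx.smul_inf_smul]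
      intro h
      exact (Set.eq_empty_iff_forall_notMem.1 huv) k' ⟨(mem_iff_smul_eq hk).2 h.symm, hk'⟩
    · rw [orbitMap_of_mem (u := u ⊓ v) ⟨hku, hkv⟩, orbitMap_of_mem hku, orbitMap_of_mem hkv,
        inf_idem]
  · rcases u.1.eq_empty_or_nonempty with hu | ⟨k, hk⟩
    · rw [orbitMap_of_empty hu, orbitMap_of_empty (by rw [smul_val, hu, Set.smul_set_empty]),
        hx.smul_bot]
    · rw [orbitMap_of_mem hk, orbitMap_of_mem (u := g • u) (Set.smul_mem_smul_set hk),
        smul_eq_mul, mul_smul]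

theorem injective_orbitMap (hx : IsFlatOrbit F x bot) :
    Injective (orbitMap (H := stabilizer F x) x bot) := by
  intro u v huv
  apply Subtype.ext
  rcases u.1.eq_empty_or_nonempty with hu | ⟨k, hk⟩ <;>
    rcases v.1.eq_empty_or_nonempty with hv | ⟨k', hk'⟩
  · rw [hu, hv]
  · rw [orbitMap_of_empty hu, orbitMap_of_mem hk'] at huv
    exact absurd huv (hx.bot_lt_smul k').ne
  · rw [orbitMap_of_mem hk, orbitMap_of_empty hv] at huv
    exact absurd huv (hx.bot_lt_smul k).ne'
  · rw [orbitMap_of_mem hk, orbitMap_of_mem hk'] at huv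
    rw [val_eq_smul_of_mem ((mem_iff_smul_eq hk).2 huv.symm), val_eq_smul_of_mem hk']

end Maroti

theorem IsFlatOrbit.inQ_maroti {B : Type} [SemilatticeInf B] [MulAction F B] {x bot : B}
    (hx : IsFlatOrbit F x bot) : InQ F B (Maroti F (stabilizer F x)) :=
  InQ.of_injective (Maroti.isHom_orbitMap hx) (Maroti.injective_orbitMap hx)

theorem minGen_maroti [Finite F] (H : Subgroup F) : MinGen F (Maroti F H) := by
  refine ⟨inferInstance, fun B _ _ hd hQ _ => ?_⟩
  obtain ⟨x, bot, hx⟩ := exists_isFlatOrbit hd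
  suffices hstab : stabilizer F x = H from hstab ▸ hx.inQ_maroti
  refine le_antisymm (fun g hg => ?_) fun h hh =>
    hQ.smul_eq_self (Maroti.forall_smul_eq_self_iff.2 hh) x
  by_contra hgH
  have hx_le : x ⊓ bot = x :=
    hQ.inf_eq_left_of_smul_eq (fun _ => Maroti.inf_eq_left_of_smul_eq hgH) hg bot
  exact (one_smul F x ▸ hx.bot_lt_smul 1).not_ge (inf_eq_left.1 hx_le)

theorem le_of_inQ_maroti {H₁ H₂ : Subgroup F} (hQ : InQ F (Maroti F H₁) (Maroti F H₂)) :
    H₁ ≤ H₂ := fun _ hh =>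
  Maroti.forall_smul_eq_self_iff.1 (hQ.smul_eq_self (Maroti.forall_smul_eq_self_iff.2 hh))

theorem MinGen.exists_inQ_maroti [Finite F] {A : Type} [SemilatticeInf A] [MulAction F A]
    (hd : ∀ (g : F) (x y : A), g • (x ⊓ y) = g • x ⊓ g • y) (hA : MinGen F A) :
    ∃ H : Subgroup F, InQ F A (Maroti F H) ∧ InQ F (Maroti F H) A := by
  have := hA.1
  obtain ⟨x, bot, hx⟩ := exists_isFlatOrbit hd
  exact ⟨_, hx.inQ_maroti, hA.2 _ Maroti.smul_inf hx.inQ_maroti inferInstance⟩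

theorem stabilizer_eq_of_inQ_maroti {A : Type} [SemilatticeInf A] [MulAction F A] {a : A}
    {H : Subgroup F} (hd : ∀ (g : F) (x y : A), g • (x ⊓ y) = g • x ⊓ g • y)
    (hgen : ∀ x : A, ∃ t : SLTerm F, t.eval a = x) (hAH : InQ F A (Maroti F H))
    (hHA : InQ F (Maroti F H) A) : stabilizer F a = H := by
  refine le_antisymm (fun g hg => ?_) fun h hh =>
    hHA.smul_eq_self (Maroti.forall_smul_eq_self_iff.2 hh) a
  refine Maroti.forall_smul_eq_self_iff.1 (hAH.smul_eq_self fun u => ?_)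
  obtain ⟨t, rfl⟩ := hgen u
  rw [← SLTerm.eval_smul_s17 hd, mem_stabilizer_iff.1 hg]

/-- For a finite abelian group `F`, the correspondence `R ↦ H_R` (the stabilizer of the
free generator of the 1-generated free algebra of `R`) is a bijection between the minimal
quasivarieties of `F`-semilattices and the subgroups of `F`, with inverse
`H ↦ Q(M(H,F))`:  (1) each `M(H,F)` generates a minimal quasivariety whose associated
stabilizer is `H` (so α ∘ β = id); (2) distinct subgroups give distinct quasivarieties
(β is injective); (3) every minimal quasivariety is generated by some `M(H,F)` (β is
surjective onto the minimal quasivarieties); (4) for a minimal quasivariety generated by a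
nontrivial 1-generated algebra `A` with generator `a` (its free algebra), the associated
subgroup is the stabilizer of `a` and `Q(A) = Q(M(H_R,F))` (so β ∘ α = id). -/
theorem stmt_17 (F : Type) [CommGroup F] [Finite F] :
    (∀ H : Subgroup F,
      MinGen F (Maroti F H) ∧ MulAction.stabilizer F (marotiGen F H) = H) ∧
    (∀ H₁ H₂ : Subgroup F,
      InQ F (Maroti F H₁) (Maroti F H₂) → InQ F (Maroti F H₂) (Maroti F H₁) → H₁ = H₂) ∧
    (∀ (A : Type) [SemilatticeInf A] [MulAction F A],
      (∀ (g : F) (x y : A), g • (x ⊓ y) = g • x ⊓ g • y) → MinGen F A →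
      ∃ H : Subgroup F, InQ F A (Maroti F H) ∧ InQ F (Maroti F H) A) ∧
    (∀ (A : Type) [SemilatticeInf A] [MulAction F A] (a : A),
      (∀ (g : F) (x y : A), g • (x ⊓ y) = g • x ⊓ g • y) →
      (∀ x : A, ∃ t : SLTerm F, t.eval a = x) → MinGen F A →
      InQ F A (Maroti F (MulAction.stabilizer F a)) ∧
        InQ F (Maroti F (MulAction.stabilizer F a)) A) := by
  refine ⟨fun H => ⟨minGen_maroti H, Maroti.stabilizer_marotiGen H⟩,
    fun H₁ H₂ h₁₂ h₂₁ => le_antisymm (le_of_inQ_maroti h₁₂) (le_of_inQ_maroti h₂₁),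
    fun A _ _ hd hA => hA.exists_inQ_maroti hd, fun A _ _ a hd hgen hA => ?_⟩
  obtain ⟨H, hAH, hHA⟩ := hA.exists_inQ_maroti hd
  rw [stabilizer_eq_of_inQ_maroti hd hgen hAH hHA]
  exact ⟨hAH, hHA⟩
end
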